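/- arXiv:1805.08266 — 2 statements merged into one kernel-verified Lean document; each statement's English description precedes it below -/
import Mathlib

section
/- Let f(x) = (1/π) x arcsin(x) + (1/π) √(1−x²) + x/2, let c⁰ ∈ [0,1), and define c^{l+1} = f(c^l) for l ≥ 0. Then the sequence (c^l) is increasing, converges to 1, and satisfies lim_{l → ∞} l² (1 − c^l) = 9π²/2; in particular 1 − c^l ∼ 9π²/(2l²) as l → ∞. -/
open Real Set Filter Topology

/-!
With `x = cos t`, `t = arccos x ∈ (0, π]`, the map reads
`f (cos t) = cos t + (sin t - t cos t) / π`, which lies strictly between `cos t` and `1`;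
so the iterates increase to the only fixed point `1`. Near `t = 0`, `1 - cos t ≈ t² / 2` and
`sin t - t cos t ≈ t³ / 3`, so writing `ε = 1 - x`,
`1 - f x = ε - (2√2 / (3π)) ε^{3/2} + o(ε^{3/2})`.
Hence the increments of `(1 - c l)^{-1/2}` tend to `√2 / (3π)`, and by Cesàro
`(1 - c l)^{-1/2} ∼ √2 l / (3π)`.
-/

theorem Real.sin_sub_mul_cos_pos {t : ℝ} (h₀ : 0 < t) (h₁ : t ≤ π) : 0 < sin t - t * cos t := by
  have hderiv (s : ℝ) : HasDerivAt (fun s => sin s - s * cos s) (s * sin s) s :=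
    ((hasDerivAt_sin s).sub ((hasDerivAt_id s).mul (hasDerivAt_cos s))).congr_deriv
      (by simp only [id_eq]; ring)
  have hmono : StrictMonoOn (fun s => sin s - s * cos s) (Icc 0 π) := by
    refine strictMonoOn_of_deriv_pos (convex_Icc 0 π) (by fun_prop) fun s hs => ?_
    rw [interior_Icc] at hs
    rw [(hderiv s).deriv]
    exact mul_pos hs.1 (sin_pos_of_pos_of_lt_pi hs.1 hs.2)
  simpa using hmono ⟨le_rfl, pi_pos.le⟩ ⟨h₀.le, h₁⟩ h₀

theorem Real.tendsto_one_sub_cos_div_sq :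
    Tendsto (fun t => (1 - cos t) / t ^ 2) (𝓝[≠] 0) (𝓝 (1 / 2)) := by
  rw [tendsto_iff_norm_sub_tendsto_zero]
  refine squeeze_zero' (Eventually.of_forall fun _ => norm_nonneg _) ?_
    (g := fun t => 5 / 96 * t ^ 2) ?_
  · filter_upwards [self_mem_nhdsWithin,
      nhdsWithin_le_nhds (Metric.closedBall_mem_nhds 0 one_pos)] with t ht₀ ht₁
    have ht₀ : t ≠ 0 := ht₀
    have hbound := cos_bound (by simpa using ht₁)
    have ht : 0 < t ^ 2 := by positivity
    rw [Real.norm_eq_abs, show (1 - cos t) / t ^ 2 - 1 / 2 = -(cos t - (1 - t ^ 2 / 2)) / t ^ 2 by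
      field_simp; ring, abs_div, abs_neg, abs_of_pos ht, div_le_iff₀ ht]
    calc _ ≤ |t| ^ 4 * (5 / 96) := hbound
      _ = 5 / 96 * t ^ 2 * t ^ 2 := by rw [show |t| ^ 4 = (|t| ^ 2) ^ 2 by ring, sq_abs]; ring
  · exact tendsto_nhdsWithin_of_tendsto_nhds <| by
      simpa using ((continuous_pow 2).tendsto (0 : ℝ)).const_mul (5 / 96)

theorem Real.tendsto_sin_sub_mul_cos_div_cube :
    Tendsto (fun t => (sin t - t * cos t) / t ^ 3) (𝓝[≠] 0) (𝓝 (1 / 3)) := by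
  rw [tendsto_iff_norm_sub_tendsto_zero]
  refine squeeze_zero' (Eventually.of_forall fun _ => norm_nonneg _) ?_
    (g := fun t => t ^ 2 / 15) ?_
  · filter_upwards [self_mem_nhdsWithin,
      nhdsWithin_le_nhds (Metric.closedBall_mem_nhds 0 one_pos)] with t ht₀ ht₁
    have ht₀ : t ≠ 0 := ht₀
    have ht₁ : |t| ≤ 1 := by simpa using ht₁
    have hcos := cos_bound ht₁
    have hsin := sin_bound ht₁
    have ht : 0 < |t ^ 3| := by positivity
    rw [Real.norm_eq_abs, show (sin t - t * cos t) / t ^ 3 - 1 / 3 =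
      ((sin t - (t - t ^ 3 / 6)) - t * (cos t - (1 - t ^ 2 / 2))) / t ^ 3 by field_simp; ring,
      abs_div, div_le_iff₀ ht]
    calc _ ≤ |sin t - (t - t ^ 3 / 6)| + |t| * |cos t - (1 - t ^ 2 / 2)| := by
          rw [← abs_mul]; exact abs_sub _ _
      _ ≤ |t| ^ 5 / 100 + |t| * (|t| ^ 4 * (5 / 96)) := by gcongr
      _ ≤ t ^ 2 / 15 * |t ^ 3| := by
          rw [abs_pow, ← sq_abs t]; nlinarith [pow_nonneg (abs_nonneg t) 5]
  · exact tendsto_nhdsWithin_of_tendsto_nhds <| by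
      simpa using ((continuous_pow 2).tendsto (0 : ℝ)).div_const 15

theorem inv_sqrt_sq_mul_sub_inv_sqrt_sq_mul {p q t : ℝ} (hp : 0 < p) (hq : 0 < q) (ht : 0 < t) :
    (√(t ^ 2 * q))⁻¹ - (√(t ^ 2 * p))⁻¹ = (p - q) / t / (√p * √q * (√p + √q)) := by
  have hp' := sq_sqrt hp.le
  have hq' := sq_sqrt hq.le
  have : 0 < √p := sqrt_pos.2 hp
  have : 0 < √q := sqrt_pos.2 hq
  rw [sqrt_mul (sq_nonneg t), sqrt_mul (sq_nonneg t), sqrt_sq ht.le]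
  field_simp
  linear_combination hp' - hq'

theorem tendsto_div_natCast_of_tendsto_sub {u : ℕ → ℝ} {b : ℝ}
    (h : Tendsto (fun n => u (n + 1) - u n) atTop (𝓝 b)) :
    Tendsto (fun n : ℕ => u n / n) atTop (𝓝 b) := by
  have hmean := h.cesaro
  simp only [Finset.sum_range_sub] at hmean
  simpa using (hmean.add (tendsto_const_div_atTop_nhds_zero_nat (u 0))).congr fun n => by ring

theorem tendsto_sq_mul_of_tendsto_inv_sqrt_sub {ε : ℕ → ℝ} {b : ℝ} (hε : ∀ n, 0 ≤ ε n)
    (hb : b ≠ 0) (h : Tendsto (fun n => (√(ε (n + 1)))⁻¹ - (√(ε n))⁻¹) atTop (𝓝 b)) :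
    Tendsto (fun n : ℕ => (n : ℝ) ^ 2 * ε n) atTop (𝓝 (b⁻¹ ^ 2)) :=
  (((tendsto_div_natCast_of_tendsto_sub h).inv₀ hb).pow 2).congr fun n => by
    rw [inv_div, div_inv_eq_mul, mul_pow, sq_sqrt (hε n)]

noncomputable def reluCorrelation (x : ℝ) : ℝ :=
  (1 / π) * x * arcsin x + (1 / π) * √(1 - x ^ 2) + x / 2

theorem continuous_reluCorrelation : Continuous reluCorrelation := by
  unfold reluCorrelation; fun_prop

theorem reluCorrelation_eq_arccos (x : ℝ) :
    reluCorrelation x = x + (√(1 - x ^ 2) - x * arccos x) / π := by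
  rw [reluCorrelation, arcsin_eq_pi_div_two_sub_arccos]
  field_simp
  ring

theorem reluCorrelation_cos {t : ℝ} (h₀ : 0 ≤ t) (h₁ : t ≤ π) :
    reluCorrelation (cos t) = cos t + (sin t - t * cos t) / π := by
  rw [reluCorrelation_eq_arccos, arccos_cos h₀ h₁, ← sin_eq_sqrt_one_sub_cos_sq h₀ h₁, mul_comm]

theorem lt_reluCorrelation {x : ℝ} (h₁ : -1 ≤ x) (h₂ : x < 1) : x < reluCorrelation x := by
  have ht := sin_sub_mul_cos_pos (arccos_pos.2 h₂) (arccos_le_pi x)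
  rw [← cos_arccos h₁ h₂.le, reluCorrelation_cos (arccos_nonneg x) (arccos_le_pi x)]
  exact lt_add_of_pos_right _ (div_pos ht pi_pos)

theorem reluCorrelation_lt_one {x : ℝ} (h₁ : -1 ≤ x) (h₂ : x < 1) : reluCorrelation x < 1 := by
  have ht : 0 < arccos x := arccos_pos.2 h₂
  have hsin := sin_lt ht
  have hπ := arccos_le_pi x
  have hcos := cos_arccos h₁ h₂.le
  rw [← hcos, reluCorrelation_cos ht.le hπ, ← lt_sub_iff_add_lt', div_lt_iff₀ pi_pos]
  nlinarith

theorem mapsTo_reluCorrelation : MapsTo reluCorrelation (Ico (-1) 1) (Ico (-1) 1) :=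
  fun _ ⟨h₁, h₂⟩ => ⟨h₁.trans (lt_reluCorrelation h₁ h₂).le, reluCorrelation_lt_one h₁ h₂⟩

theorem strictMono_iterate_reluCorrelation {x : ℝ} (hx : x ∈ Ico (-1) 1) :
    StrictMono fun n => reluCorrelation^[n] x :=
  strictMono_nat_of_lt_succ fun n => by
    have ⟨h₁, h₂⟩ := mapsTo_reluCorrelation.iterate n hx
    rw [Function.iterate_succ_apply']
    exact lt_reluCorrelation h₁ h₂

theorem tendsto_iterate_reluCorrelation {x : ℝ} (hx : x ∈ Ico (-1) 1) :
    Tendsto (fun n => reluCorrelation^[n] x) atTop (𝓝 1) := by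
  have hmem (n : ℕ) := mapsTo_reluCorrelation.iterate n hx
  have hlim := tendsto_atTop_ciSup (strictMono_iterate_reluCorrelation hx).monotone
    ⟨1, forall_mem_range.2 fun n => (hmem n).2.le⟩
  have hfix := isFixedPt_of_tendsto_iterate hlim continuous_reluCorrelation.continuousAt
  have hle : ⨆ n, reluCorrelation^[n] x ≤ 1 := le_of_tendsto' hlim fun n => (hmem n).2.le
  have hge : -1 ≤ ⨆ n, reluCorrelation^[n] x := ge_of_tendsto' hlim fun n => (hmem n).1
  obtain heq | hlt := hle.eq_or_lt
  · rwa [heq] at hlim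
  · exact absurd hfix (lt_reluCorrelation hge hlt).ne'

theorem tendsto_inv_sqrt_one_sub_reluCorrelation_cos_sub :
    Tendsto (fun t => (√(1 - reluCorrelation (cos t)))⁻¹ - (√(1 - cos t))⁻¹) (𝓝[>] 0)
      (𝓝 (√2 / (3 * π))) := by
  set P := fun t : ℝ => (1 - cos t) / t ^ 2
  set D := fun t : ℝ => (sin t - t * cos t) / t ^ 3 / π
  have hP : Tendsto P (𝓝[>] 0) (𝓝 (1 / 2)) :=
    tendsto_one_sub_cos_div_sq.mono_left (nhdsGT_le_nhdsNE 0)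
  have hD : Tendsto D (𝓝[>] 0) (𝓝 (1 / 3 / π)) :=
    (tendsto_sin_sub_mul_cos_div_cube.mono_left (nhdsGT_le_nhdsNE 0)).div_const π
  have hQ : Tendsto (fun t => P t - t * D t) (𝓝[>] 0) (𝓝 (1 / 2)) := by
    simpa using hP.sub ((tendsto_nhdsWithin_of_tendsto_nhds tendsto_id).mul hD)
  have hs : √(1 / 2 : ℝ) * √(1 / 2) = 1 / 2 := mul_self_sqrt (by norm_num)
  have hlim := hD.div ((hP.sqrt.mul hQ.sqrt).mul (hP.sqrt.add hQ.sqrt)) (by positivity)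
  convert hlim.congr' ?_ using 2
  · rw [hs, one_div (2 : ℝ), sqrt_inv]
    field_simp
    norm_num
  · filter_upwards [self_mem_nhdsWithin, Ioo_mem_nhdsGT pi_pos,
      hP.eventually_const_lt one_half_pos, hQ.eventually_const_lt one_half_pos]
      with t ht₀ htπ hPt hQt
    have ht₀ : 0 < t := ht₀
    have h₁ : 1 - cos t = t ^ 2 * P t := by simp only [P]; field_simp
    have h₂ : 1 - reluCorrelation (cos t) = t ^ 2 * (P t - t * D t) := by
      rw [reluCorrelation_cos ht₀.le htπ.2.le]; simp only [P, D]; field_simp; ring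
    rw [h₁, h₂, inv_sqrt_sq_mul_sub_inv_sqrt_sq_mul hPt hQt ht₀, sub_sub_cancel,
      mul_div_cancel_left₀ _ ht₀.ne']
    rfl

theorem tendsto_inv_sqrt_one_sub_iterate_reluCorrelation_sub {x : ℝ} (hx : x ∈ Ico (-1) 1) :
    Tendsto (fun n => (√(1 - reluCorrelation^[n + 1] x))⁻¹ - (√(1 - reluCorrelation^[n] x))⁻¹)
      atTop (𝓝 (√2 / (3 * π))) := by
  have hmem (n : ℕ) := mapsTo_reluCorrelation.iterate n hx
  have hangle : Tendsto (fun n => arccos (reluCorrelation^[n] x)) atTop (𝓝[>] 0) := by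
    refine tendsto_nhdsWithin_iff.2 ⟨?_, Eventually.of_forall fun n => arccos_pos.2 (hmem n).2⟩
    rw [← arccos_one]
    exact (continuous_arccos.tendsto 1).comp (tendsto_iterate_reluCorrelation hx)
  refine (tendsto_inv_sqrt_one_sub_reluCorrelation_cos_sub.comp hangle).congr fun n => ?_
  simp only [Function.comp_apply, cos_arccos (hmem n).1 (hmem n).2.le,
    Function.iterate_succ_apply']

/-- Iterating the ReLU correlation function `f(x) = (1/π) x arcsin(x) + (1/π)√(1−x²) + x/2`
from `c⁰ ∈ [0,1)` gives an increasing sequence converging to `1` with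
`l²(1 − c^l) → 9π²/2`, i.e. `1 − c^l ∼ 9π²/(2l²)`. -/
theorem stmt10 (f : ℝ → ℝ)
    (hf : ∀ x, f x = (1 / π) * x * Real.arcsin x + (1 / π) * Real.sqrt (1 - x ^ 2) + x / 2)
    (c : ℕ → ℝ) (hc0 : c 0 ∈ Ico (0:ℝ) 1) (hrec : ∀ l, c (l + 1) = f (c l)) :
    StrictMono c ∧ Tendsto c atTop (𝓝 1) ∧
      Tendsto (fun l : ℕ => (l : ℝ) ^ 2 * (1 - c l)) atTop (𝓝 (9 * π ^ 2 / 2)) := by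
  obtain rfl : f = reluCorrelation := funext hf
  have hc : c = fun n => reluCorrelation^[n] (c 0) := by
    funext n
    induction n with
    | zero => rfl
    | succ n ih => rw [hrec, ih, Function.iterate_succ_apply']
  have hx : c 0 ∈ Ico (-1) 1 := ⟨by linarith [hc0.1], hc0.2⟩
  rw [hc]
  refine ⟨strictMono_iterate_reluCorrelation hx, tendsto_iterate_reluCorrelation hx, ?_⟩
  convert tendsto_sq_mul_of_tendsto_inv_sqrt_sub
    (fun n => sub_nonneg.2 (mapsTo_reluCorrelation.iterate n hx).2.le) (by positivity)
    (tendsto_inv_sqrt_one_sub_iterate_reluCorrelation_sub hx) using 2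
  rw [inv_div, div_pow, sq_sqrt zero_le_two]
  ring
end

section
/- Let φ: ℝ → ℝ be continuous with φ(0) = 0, possessing a right derivative φ'(0⁺) and a left derivative φ'(0⁻) at 0, and satisfying |φ(y)| ≤ k|y| for all y and some k > 0. Then lim_{x → 0⁺} E[φ(√x Z)²]/x = (φ'(0⁺)² + φ'(0⁻)²)/2, where Z is a standard Gaussian random variable. -/
/-!
Dominated convergence with majorant `k² z²`. Pointwise, `φ (√x z) / √x` tends to
`twoSlope φ'(0⁺) φ'(0⁻) z`, the one-sided linearization of `φ` at `0`. Its second moment under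
`N(0,1)` follows from the symmetry `Z ~ -Z` together with
`twoSlope z ^ 2 + twoSlope (-z) ^ 2 = (φ'(0⁺)² + φ'(0⁻)²) z²` and `E[Z²] = 1`.
-/

open MeasureTheory ProbabilityTheory Real Filter Topology Set

/-- The standard Gaussian measure `N(0,1)` on `ℝ`. -/
noncomputable def stdG : Measure ℝ := gaussianReal 0 1

theorem tendsto_sqrt_nhdsGT_zero : Tendsto (√·) (𝓝[>] 0) (𝓝[>] 0) := by
  simpa using continuous_sqrt.continuousWithinAt.tendsto_nhdsWithin
    (x := 0) (s := Ioi 0) (t := Ioi 0) fun _ hx => sqrt_pos.2 hx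

theorem tendsto_div_nhdsGT_of_hasDerivWithinAt_Ici {f : ℝ → ℝ} {d : ℝ} (hf0 : f 0 = 0)
    (hf : HasDerivWithinAt f d (Ici 0) 0) :
    Tendsto (fun t => f t / t) (𝓝[>] 0) (𝓝 d) := by
  have h := hasDerivWithinAt_iff_tendsto_slope.mp hf
  rw [Ici_sdiff_left] at h
  exact h.congr fun t => by simp [slope_def_field, hf0]

noncomputable def twoSlope (a b z : ℝ) : ℝ := a * max z 0 + b * min z 0

theorem continuous_twoSlope (a b : ℝ) : Continuous (twoSlope a b) := by
  unfold twoSlope; fun_prop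

theorem twoSlope_neg (a b z : ℝ) : twoSlope a b (-z) = twoSlope (-b) (-a) z := by
  rcases le_total 0 z with hz | hz <;> simp [twoSlope, hz]

theorem twoSlope_sq_add_twoSlope_neg_sq (a b z : ℝ) :
    twoSlope a b z ^ 2 + twoSlope a b (-z) ^ 2 = (a ^ 2 + b ^ 2) * z ^ 2 := by
  rw [twoSlope_neg]
  rcases le_total 0 z with hz | hz
  · simp only [twoSlope, max_eq_left hz, min_eq_right hz]; ring
  · simp only [twoSlope, max_eq_right hz, min_eq_left hz]; ring

theorem hasDerivWithinAt_comp_mul_Ici {f : ℝ → ℝ} {a b : ℝ}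
    (ha : HasDerivWithinAt f a (Ici 0) 0) (hb : HasDerivWithinAt f b (Iic 0) 0) (z : ℝ) :
    HasDerivWithinAt (fun t => f (t * z)) (twoSlope a b z) (Ici 0) 0 := by
  have hmul : HasDerivWithinAt (· * z) z (Ici 0) 0 := by
    simpa using (hasDerivWithinAt_id (0 : ℝ) (Ici 0)).mul_const z
  rcases le_total 0 z with hz | hz
  · simpa [twoSlope, hz, Function.comp_def] using
      ha.comp_of_eq 0 hmul (fun t ht => mul_nonneg ht hz) (zero_mul z).symm
  · simpa [twoSlope, hz, Function.comp_def] using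
      hb.comp_of_eq 0 hmul (fun t ht => mul_nonpos_of_nonneg_of_nonpos ht hz) (zero_mul z).symm

theorem tendsto_sq_comp_sqrt_mul_div {f : ℝ → ℝ} {a b : ℝ} (hf0 : f 0 = 0)
    (ha : HasDerivWithinAt f a (Ici 0) 0) (hb : HasDerivWithinAt f b (Iic 0) 0) (z : ℝ) :
    Tendsto (fun x => f (√x * z) ^ 2 / x) (𝓝[>] 0) (𝓝 (twoSlope a b z ^ 2)) := by
  have h := ((tendsto_div_nhdsGT_of_hasDerivWithinAt_Ici (by simpa using hf0)
    (hasDerivWithinAt_comp_mul_Ici ha hb z)).comp tendsto_sqrt_nhdsGT_zero).pow 2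
  refine h.congr' ?_
  filter_upwards [self_mem_nhdsWithin] with x hx
  simp [div_pow, sq_sqrt (le_of_lt hx)]

theorem norm_sq_comp_sqrt_mul_div_le {f : ℝ → ℝ} {k : ℝ} (hf : ∀ y, |f y| ≤ k * |y|)
    {x : ℝ} (hx : 0 < x) (z : ℝ) : ‖f (√x * z) ^ 2 / x‖ ≤ k ^ 2 * z ^ 2 := by
  have h := hf (√x * z)
  rw [abs_mul, abs_of_nonneg (sqrt_nonneg x)] at h
  rw [Real.norm_of_nonneg (by positivity), div_le_iff₀ hx]
  calc f (√x * z) ^ 2 = |f (√x * z)| ^ 2 := (sq_abs _).symm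
    _ ≤ (k * (√x * |z|)) ^ 2 := pow_le_pow_left₀ (abs_nonneg _) h 2
    _ = k ^ 2 * z ^ 2 * x := by rw [mul_pow, mul_pow, sq_sqrt hx.le, sq_abs]; ring

theorem integral_comp_neg_stdG (g : ℝ → ℝ) : ∫ z, g (-z) ∂stdG = ∫ z, g z ∂stdG := by
  conv_rhs => rw [stdG, ← neg_zero, ← gaussianReal_map_neg]
  exact (integral_map_equiv (MeasurableEquiv.neg ℝ) g).symm

theorem integrable_sq_stdG : Integrable (fun z => z ^ 2) stdG :=
  (memLp_id_gaussianReal 2).integrable_sq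

theorem integral_sq_stdG : ∫ z, z ^ 2 ∂stdG = 1 := by
  have := variance_eq_integral (μ := stdG) (X := id) measurable_id.aemeasurable
  simpa [stdG, integral_id_gaussianReal] using this.symm

theorem integrable_twoSlope_sq_stdG (a b : ℝ) :
    Integrable (fun z => twoSlope a b z ^ 2) stdG := by
  refine (integrable_sq_stdG.const_mul (a ^ 2 + b ^ 2)).mono'
    ((continuous_twoSlope a b).pow 2).aestronglyMeasurable (ae_of_all _ fun z => ?_)
  rw [Real.norm_of_nonneg (sq_nonneg _)]
  nlinarith [twoSlope_sq_add_twoSlope_neg_sq a b z, sq_nonneg (twoSlope a b (-z))]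

theorem integral_twoSlope_sq_stdG (a b : ℝ) :
    ∫ z, twoSlope a b z ^ 2 ∂stdG = (a ^ 2 + b ^ 2) / 2 := by
  have hsum : 2 * ∫ z, twoSlope a b z ^ 2 ∂stdG = a ^ 2 + b ^ 2 :=
    calc 2 * ∫ z, twoSlope a b z ^ 2 ∂stdG
        = (∫ z, twoSlope a b z ^ 2 ∂stdG) + ∫ z, twoSlope a b (-z) ^ 2 ∂stdG := by
          rw [integral_comp_neg_stdG (fun z => twoSlope a b z ^ 2)]; ring
      _ = ∫ z, (twoSlope a b z ^ 2 + twoSlope a b (-z) ^ 2) ∂stdG := by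
          refine (integral_add (integrable_twoSlope_sq_stdG a b) ?_).symm
          simpa only [twoSlope_neg] using integrable_twoSlope_sq_stdG (-b) (-a)
      _ = a ^ 2 + b ^ 2 := by
          simp_rw [twoSlope_sq_add_twoSlope_neg_sq]
          rw [integral_const_mul, integral_sq_stdG, mul_one]
  linarith

theorem stmt14_general (φ : ℝ → ℝ) (k dp dm : ℝ)
    (hφc : Continuous φ) (hφ0 : φ 0 = 0)
    (hdp : HasDerivWithinAt φ dp (Ici 0) 0)
    (hdm : HasDerivWithinAt φ dm (Iic 0) 0)
    (hbnd : ∀ y : ℝ, |φ y| ≤ k * |y|) :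
    Tendsto (fun x => (∫ z, (φ (Real.sqrt x * z)) ^ 2 ∂stdG) / x) (𝓝[>] 0)
      (𝓝 ((dp ^ 2 + dm ^ 2) / 2)) := by
  have hmeas : ∀ᶠ x in 𝓝[>] (0 : ℝ), AEStronglyMeasurable (fun z => φ (√x * z) ^ 2 / x) stdG :=
    Eventually.of_forall fun x => by fun_prop
  have hdom : ∀ᶠ x in 𝓝[>] (0 : ℝ), ∀ᵐ z ∂stdG, ‖φ (√x * z) ^ 2 / x‖ ≤ k ^ 2 * z ^ 2 := by
    filter_upwards [self_mem_nhdsWithin] with x hx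
    exact ae_of_all _ (norm_sq_comp_sqrt_mul_div_le hbnd hx)
  have h := tendsto_integral_filter_of_dominated_convergence _ hmeas hdom
    (integrable_sq_stdG.const_mul _) (ae_of_all _ (tendsto_sq_comp_sqrt_mul_div hφ0 hdp hdm))
  rw [integral_twoSlope_sq_stdG] at h
  simpa only [integral_div] using h

/-- For a continuous `φ` with `φ(0) = 0`, one-sided derivatives `dp = φ'(0⁺)`, `dm = φ'(0⁻)`
at `0`, and linear growth `|φ(y)| ≤ k|y|`, one has
`lim_{x → 0⁺} E[φ(√x Z)²]/x = (φ'(0⁺)² + φ'(0⁻)²)/2`. -/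
theorem stmt14 (φ : ℝ → ℝ) (k dp dm : ℝ)
    (hφc : Continuous φ) (hφ0 : φ 0 = 0)
    (hdp : HasDerivWithinAt φ dp (Ici 0) 0)
    (hdm : HasDerivWithinAt φ dm (Iic 0) 0)
    (hk : 0 < k) (hbnd : ∀ y : ℝ, |φ y| ≤ k * |y|) :
    Tendsto (fun x => (∫ z, (φ (Real.sqrt x * z)) ^ 2 ∂stdG) / x) (𝓝[>] 0)
      (𝓝 ((dp ^ 2 + dm ^ 2) / 2)) :=
  stmt14_general φ k dp dm hφc hφ0 hdp hdm hbnd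
end
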